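/- Pathwise convergence of square roots of fractional Cox–Ingersoll–Ross paths to a reflected fractional Ornstein–Uhlenbeck path (deterministic form of the paper's Theorem 3, continuum version): let y₀, b, σ > 0, and let B : [0,∞) → ℝ be continuous with B(0) = 0 and locally Hölder continuous, i.e. there exists λ ∈ (0,1) such that for every T > 0 there is Λ_T ≥ 0 with |B(t) − B(s)| ≤ Λ_T·|t − s|^λ for all s, t ∈ [0,T]. Suppose that for every ε > 0 there is a continuous, strictly positive Y_ε : [0,∞) → ℝ solving E(ε). Then: (1) for every t ≥ 0 the limit Y(t) := lim_{ε↓0} Y_ε(t) exists, is finite and nonnegative; (2) the limit L(t) := lim_{ε↓0} (1/2)·∫₀ᵗ ε/Y_ε(s) ds exists for every t, L is a reflection function for Y, and Y(t) = y₀ − (b/2)·∫₀ᵗ Y(s) ds + (σ/2)·B(t) + L(t) for all t ≥ 0; (3) for every T > 0, sup_{t∈[0,T]} |Y(t) − Y_ε(t)| → 0 and sup_{t∈[0,T]} |L(t) − (1/2)·∫₀ᵗ ε/Y_ε(s) ds| → 0 as ε ↓ 0. -/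

import Mathlib

/-!
The noise cancels in the difference `D = Y_{ε₁} - Y_{ε₂}` of two solutions, so everything follows
from last-crossing arguments on the drifts. If `ε₂ ≤ ε₁`, the drift difference is nonnegative after
the last zero of `D` preceding a time where `D < 0`; hence `D ≥ 0`. If `D t = m > 0`, then after the
last time `D` equals `m / 2` we have `Y_{ε₁} ≥ m / 2`, so `m / 2 ≤ ½ ∫ ε₁ / Y_{ε₁} ≤ t ε₁ / m`, that
is `D t ≤ √(2 t ε₁)`. Thus `Y_ε` decreases, as `ε ↓ 0`, uniformly on compacts to its infimum `Y`.
Solving `E(ε)` for `½ ∫₀ᵗ ε / Y_ε` expresses it as a functional of `Y_ε` that is continuous for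
uniform convergence, and its value at `Y` is `L`. `L` is nondecreasing as a limit of nondecreasing
functions, and flat where `Y ≥ δ > 0`, because there `½ ∫ₛᵗ ε / Y_ε ≤ (t - s) ε / (2δ)`.
-/

open Set Filter MeasureTheory intervalIntegral Topology

/-- `L` is a reflection function for `Y` on `[0, ∞)`: `L` is continuous, nondecreasing,
`L 0 = 0`, and `L` grows only at zeros of `Y`. -/
def IsReflectionFn (L Y : ℝ → ℝ) : Prop :=
  ContinuousOn L (Set.Ici 0) ∧ MonotoneOn L (Set.Ici 0) ∧ L 0 = 0 ∧
    ∀ s t : ℝ, 0 ≤ s → s ≤ t → (∀ u ∈ Set.Icc s t, 0 < Y u) → L t = L s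

/-- A continuous, strictly positive `Y : [0, ∞) → ℝ` solves the singular equation `E(ε)`
if `Y t = y₀ + (1/2) ∫₀ᵗ (ε / Y s - b * Y s) ds + (σ/2) B t` for all `t ≥ 0`. -/
def SolvesE (y₀ b σ : ℝ) (B : ℝ → ℝ) (ε : ℝ) (Y : ℝ → ℝ) : Prop :=
  ContinuousOn Y (Set.Ici 0) ∧ (∀ t, 0 ≤ t → 0 < Y t) ∧
    ∀ t, 0 ≤ t →
      Y t = y₀ + (1 / 2) * (∫ s in (0:ℝ)..t, (ε / Y s - b * Y s)) + (σ / 2) * B t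

lemma continuousOn_Ici_of_forall_Icc {f : ℝ → ℝ} {a : ℝ}
    (h : ∀ T, a ≤ T → ContinuousOn f (Icc a T)) : ContinuousOn f (Ici a) :=
  continuousOn_of_locally_continuousOn fun t ht => ⟨Iio (t + 1), isOpen_Iio, lt_add_one t,
    (h (t + 1) (ht.out.trans (lt_add_one t).le)).mono fun _ hx => ⟨hx.1, hx.2.le⟩⟩

lemma ContinuousOn.intervalIntegrable_of_Ici {f : ℝ → ℝ} {x₀ : ℝ}
    (hf : ContinuousOn f (Ici x₀)) ⦃a c : ℝ⦄ (ha : x₀ ≤ a) (hc : x₀ ≤ c) :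
    IntervalIntegrable f volume a c :=
  (hf.mono fun _ hx => le_trans (le_min ha hc) hx.1).intervalIntegrable

lemma intervalIntegral_le_mul_of_le {f : ℝ → ℝ} {a c C : ℝ} (hac : a ≤ c)
    (hf : IntervalIntegrable f volume a c) (h : ∀ x ∈ Icc a c, f x ≤ C) :
    ∫ x in a..c, f x ≤ (c - a) * C := by
  simpa [mul_comm] using integral_mono_on hac hf intervalIntegrable_const h

lemma exists_last_crossing {f : ℝ → ℝ} {a b c : ℝ} (hab : a ≤ b)
    (hf : ContinuousOn f (Icc a b)) (ha : f a ≤ c) (hb : c ≤ f b) :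
    ∃ t₁ ∈ Icc a b, f t₁ = c ∧ ∀ u ∈ Icc t₁ b, c ≤ f u := by
  have hK : IsCompact (Icc a b ∩ f ⁻¹' Iic c) := isCompact_Icc.of_isClosed_subset
    (hf.preimage_isClosed_of_isClosed isClosed_Icc isClosed_Iic) inter_subset_left
  obtain ⟨t₁, ⟨ht₁, ht₁c⟩, hlast⟩ := hK.exists_isGreatest ⟨a, left_mem_Icc.2 hab, ha⟩
  have hlast' : ∀ u ∈ Icc t₁ b, f u ≤ c → u = t₁ := fun u hu hfu =>
    le_antisymm (hlast ⟨⟨ht₁.1.trans hu.1, hu.2⟩, hfu⟩) hu.1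
  obtain ⟨t', ht', hft'⟩ := intermediate_value_Icc ht₁.2 (hf.mono (Icc_subset_Icc_left ht₁.1))
    ⟨ht₁c, hb⟩
  obtain rfl := hlast' t' ht' hft'.le
  refine ⟨t', ht₁, hft', fun u hu => ?_⟩
  by_contra! hu'
  obtain rfl := hlast' u hu hu'.le
  exact hu'.ne hft'

lemma tendstoUniformlyOn_of_abs_sub_le {ι α : Type*} {l : Filter ι} {F : ι → α → ℝ}
    {G : α → ℝ} {s : Set α} {u : ι → ℝ} (hu : Tendsto u l (𝓝 0))
    (h : ∀ᶠ i in l, ∀ x ∈ s, |F i x - G x| ≤ u i) : TendstoUniformlyOn F G l s := by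
  rw [Metric.tendstoUniformlyOn_iff]
  intro δ hδ
  filter_upwards [hu.eventually (gt_mem_nhds hδ), h] with i hi hbound x hx
  rw [Real.dist_eq, abs_sub_comm]
  exact (hbound x hx).trans_lt hi

lemma tendsto_sqrt_mul_nhdsGT_zero (c : ℝ) :
    Tendsto (fun ε : ℝ => √(c * ε)) (𝓝[>] (0:ℝ)) (𝓝 0) :=
  tendsto_nhdsWithin_of_tendsto_nhds (Continuous.tendsto' (by fun_prop) 0 0 (by simp))

namespace SolvesE

variable {y₀ b σ ε ε₁ ε₂ : ℝ} {B Y Y₁ Y₂ : ℝ → ℝ}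

lemma apply_zero (h : SolvesE y₀ b σ B ε Y) (hB0 : B 0 = 0) : Y 0 = y₀ := by
  simpa [hB0] using h.2.2 0 le_rfl

lemma continuousOn_div (h : SolvesE y₀ b σ B ε Y) :
    ContinuousOn (fun s => ε / Y s) (Ici 0) :=
  continuousOn_const.div h.1 fun s hs => (h.2.1 s hs).ne'

lemma continuousOn_drift (h : SolvesE y₀ b σ B ε Y) :
    ContinuousOn (fun s => ε / Y s - b * Y s) (Ici 0) :=
  h.continuousOn_div.sub (continuousOn_const.mul h.1)

lemma sub_sub_sub_eq (h₁ : SolvesE y₀ b σ B ε₁ Y₁) (h₂ : SolvesE y₀ b σ B ε₂ Y₂)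
    {a c : ℝ} (ha : 0 ≤ a) (hc : 0 ≤ c) :
    (Y₁ c - Y₂ c) - (Y₁ a - Y₂ a) =
      1 / 2 * ∫ s in a..c, ((ε₁ / Y₁ s - b * Y₁ s) - (ε₂ / Y₂ s - b * Y₂ s)) := by
  have hi₁ := h₁.continuousOn_drift.intervalIntegrable_of_Ici
  have hi₂ := h₂.continuousOn_drift.intervalIntegrable_of_Ici
  rw [integral_sub (hi₁ ha hc) (hi₂ ha hc),
    ← integral_interval_sub_left (hi₁ le_rfl hc) (hi₁ le_rfl ha),
    ← integral_interval_sub_left (hi₂ le_rfl hc) (hi₂ le_rfl ha)]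
  linear_combination h₁.2.2 c hc - h₂.2.2 c hc - h₁.2.2 a ha + h₂.2.2 a ha

lemma half_integral_div_sub (h : SolvesE y₀ b σ B ε Y) {s t : ℝ} (hs : 0 ≤ s) (ht : 0 ≤ t) :
    1 / 2 * (∫ u in (0:ℝ)..t, ε / Y u) - 1 / 2 * (∫ u in (0:ℝ)..s, ε / Y u) =
      1 / 2 * ∫ u in s..t, ε / Y u := by
  have hi := h.continuousOn_div.intervalIntegrable_of_Ici
  rw [← mul_sub, integral_interval_sub_left (hi le_rfl ht) (hi le_rfl hs)]

lemma le_of_param_le (h₁ : SolvesE y₀ b σ B ε₁ Y₁) (h₂ : SolvesE y₀ b σ B ε₂ Y₂) (hb : 0 ≤ b)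
    (hB0 : B 0 = 0) (hε₂ : 0 ≤ ε₂) (hε : ε₂ ≤ ε₁) {t : ℝ} (ht : 0 ≤ t) : Y₂ t ≤ Y₁ t := by
  by_contra! hlt
  obtain ⟨t₁, ht₁, hcross, hafter⟩ := exists_last_crossing (f := fun s => Y₂ s - Y₁ s) ht
    ((h₂.1.sub h₁.1).mono Icc_subset_Ici_self)
    (by simp [h₁.apply_zero hB0, h₂.apply_zero hB0]) (sub_nonneg.2 hlt.le)
  have hdrift : 0 ≤ ∫ s in t₁..t, ((ε₁ / Y₁ s - b * Y₁ s) - (ε₂ / Y₂ s - b * Y₂ s)) := by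
    refine integral_nonneg ht₁.2 fun s hs => ?_
    have hs0 : 0 ≤ s := ht₁.1.trans hs.1
    have hY : Y₁ s ≤ Y₂ s := sub_nonneg.1 (hafter s hs)
    have hY₁ := h₁.2.1 s hs0
    have : ε₂ / Y₂ s ≤ ε₁ / Y₁ s := calc
      ε₂ / Y₂ s ≤ ε₂ / Y₁ s := by gcongr
      _ ≤ ε₁ / Y₁ s := by gcongr
    nlinarith
  have := h₁.sub_sub_sub_eq h₂ ht₁.1 ht
  linarith [show Y₂ t₁ - Y₁ t₁ = 0 from hcross]

lemma sub_le_sqrt (h₁ : SolvesE y₀ b σ B ε₁ Y₁) (h₂ : SolvesE y₀ b σ B ε₂ Y₂) (hb : 0 ≤ b)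
    (hB0 : B 0 = 0) (hε₁ : 0 ≤ ε₁) (hε₂ : 0 ≤ ε₂) {t : ℝ} (ht : 0 ≤ t) :
    Y₁ t - Y₂ t ≤ √(2 * t * ε₁) := by
  set m := Y₁ t - Y₂ t
  rcases le_or_gt m 0 with hm | hm
  · exact hm.trans (Real.sqrt_nonneg _)
  obtain ⟨t₁, ht₁, hcross, hafter⟩ := exists_last_crossing (f := fun s => Y₁ s - Y₂ s)
    (c := m / 2) ht ((h₁.1.sub h₂.1).mono Icc_subset_Ici_self)
    (by simp [h₁.apply_zero hB0, h₂.apply_zero hB0]; positivity) (by simp only [m]; linarith)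
  have hdrift : ∫ s in t₁..t, ((ε₁ / Y₁ s - b * Y₁ s) - (ε₂ / Y₂ s - b * Y₂ s)) ≤
      (t - t₁) * (2 * ε₁ / m) := by
    refine intervalIntegral_le_mul_of_le ht₁.2
      ((h₁.continuousOn_drift.sub h₂.continuousOn_drift).intervalIntegrable_of_Ici ht₁.1 ht)
      fun s hs => ?_
    have hs0 : 0 ≤ s := ht₁.1.trans hs.1
    have hD : m / 2 ≤ Y₁ s - Y₂ s := hafter s hs
    have hY₂ := h₂.2.1 s hs0
    have : ε₁ / Y₁ s ≤ 2 * ε₁ / m := calc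
      ε₁ / Y₁ s ≤ ε₁ / (m / 2) := by gcongr; linarith
      _ = 2 * ε₁ / m := by rw [div_div_eq_mul_div, mul_comm]
    have : 0 ≤ ε₂ / Y₂ s := by positivity
    nlinarith
  have hhalf : m / 2 ≤ (t - t₁) * ε₁ / m := calc
    m / 2 = 1 / 2 * ∫ s in t₁..t, ((ε₁ / Y₁ s - b * Y₁ s) - (ε₂ / Y₂ s - b * Y₂ s)) := by
      linarith [h₁.sub_sub_sub_eq h₂ ht₁.1 ht, show Y₁ t₁ - Y₂ t₁ = m / 2 from hcross]
    _ ≤ 1 / 2 * ((t - t₁) * (2 * ε₁ / m)) := by gcongr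
    _ = (t - t₁) * ε₁ / m := by ring
  rw [Real.le_sqrt' hm]
  nlinarith [(le_div_iff₀ hm).1 hhalf, ht₁.1]

end SolvesE

noncomputable def lowerEnvelope (Yε : ℝ → ℝ → ℝ) (t : ℝ) : ℝ := ⨅ ε : Ioi (0:ℝ), Yε ε t

/-- Solves `X t = y₀ - (b/2) ∫₀ᵗ X + (σ/2) B t + L t` for `L t`. -/
noncomputable def regulator (y₀ b σ : ℝ) (B X : ℝ → ℝ) (t : ℝ) : ℝ :=
  X t - y₀ - σ / 2 * B t + b / 2 * ∫ s in (0:ℝ)..t, X s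

section Limit

variable {y₀ b σ : ℝ} {B : ℝ → ℝ} {Yε : ℝ → ℝ → ℝ}

lemma lowerEnvelope_le (hYε : ∀ ε, 0 < ε → SolvesE y₀ b σ B ε (Yε ε)) {t ε : ℝ}
    (ht : 0 ≤ t) (hε : 0 < ε) : lowerEnvelope Yε t ≤ Yε ε t :=
  ciInf_le ⟨0, by rintro _ ⟨ε', rfl⟩; exact ((hYε ε' ε'.2).2.1 t ht).le⟩ (⟨ε, hε⟩ : Ioi (0:ℝ))

lemma lowerEnvelope_nonneg (hYε : ∀ ε, 0 < ε → SolvesE y₀ b σ B ε (Yε ε)) {t : ℝ}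
    (ht : 0 ≤ t) : 0 ≤ lowerEnvelope Yε t :=
  le_ciInf fun ε => ((hYε ε ε.2).2.1 t ht).le

lemma lowerEnvelope_zero (hB0 : B 0 = 0) (hYε : ∀ ε, 0 < ε → SolvesE y₀ b σ B ε (Yε ε)) :
    lowerEnvelope Yε 0 = y₀ :=
  (congrArg _ (funext fun ε : Ioi (0:ℝ) => (hYε ε ε.2).apply_zero hB0)).trans ciInf_const

lemma abs_sub_lowerEnvelope_le (hb : 0 ≤ b) (hB0 : B 0 = 0)
    (hYε : ∀ ε, 0 < ε → SolvesE y₀ b σ B ε (Yε ε)) {T t ε : ℝ} (ht : t ∈ Icc 0 T)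
    (hε : 0 < ε) : |Yε ε t - lowerEnvelope Yε t| ≤ √(2 * T * ε) := by
  have hsqrt : √(2 * t * ε) ≤ √(2 * T * ε) := Real.sqrt_le_sqrt (by gcongr; exact ht.2)
  have hupper : Yε ε t - √(2 * t * ε) ≤ lowerEnvelope Yε t := by
    refine le_ciInf fun ε' => ?_
    rcases le_total (ε' : ℝ) ε with hle | hle
    · linarith [(hYε ε hε).sub_le_sqrt (hYε ε' ε'.2) hb hB0 hε.le ε'.2.le ht.1]
    · linarith [(hYε ε' ε'.2).le_of_param_le (hYε ε hε) hb hB0 hε.le hle ht.1,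
        Real.sqrt_nonneg (2 * t * ε)]
  rw [abs_of_nonneg (sub_nonneg.2 (lowerEnvelope_le hYε ht.1 hε))]
  linarith

lemma tendstoUniformlyOn_lowerEnvelope (hb : 0 ≤ b) (hB0 : B 0 = 0)
    (hYε : ∀ ε, 0 < ε → SolvesE y₀ b σ B ε (Yε ε)) (T : ℝ) :
    TendstoUniformlyOn Yε (lowerEnvelope Yε) (𝓝[>] (0:ℝ)) (Icc 0 T) :=
  tendstoUniformlyOn_of_abs_sub_le (tendsto_sqrt_mul_nhdsGT_zero (2 * T)) <|
    eventually_mem_nhdsWithin.mono fun _ hε _ ht => abs_sub_lowerEnvelope_le hb hB0 hYε ht hε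

lemma continuousOn_lowerEnvelope (hb : 0 ≤ b) (hB0 : B 0 = 0)
    (hYε : ∀ ε, 0 < ε → SolvesE y₀ b σ B ε (Yε ε)) :
    ContinuousOn (lowerEnvelope Yε) (Ici 0) :=
  continuousOn_Ici_of_forall_Icc fun T _ =>
    (tendstoUniformlyOn_lowerEnvelope hb hB0 hYε T).continuousOn <| Eventually.frequently <|
      eventually_mem_nhdsWithin.mono fun ε hε => (hYε ε hε).1.mono Icc_subset_Ici_self

end Limit

section Regulator

variable {y₀ b σ ε : ℝ} {B Y : ℝ → ℝ}

lemma SolvesE.regulator_eq (h : SolvesE y₀ b σ B ε Y) {t : ℝ} (ht : 0 ≤ t) :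
    regulator y₀ b σ B Y t = 1 / 2 * ∫ s in (0:ℝ)..t, ε / Y s := by
  have hi := h.continuousOn_div.intervalIntegrable_of_Ici le_rfl ht
  have hY := h.1.intervalIntegrable_of_Ici le_rfl ht
  have := h.2.2 t ht
  rw [integral_sub hi (hY.const_mul b), intervalIntegral.integral_const_mul] at this
  rw [regulator]
  linarith

lemma abs_regulator_sub_le {X X' : ℝ → ℝ} {T t δ : ℝ} (ht : t ∈ Icc 0 T)
    (hX : IntervalIntegrable X volume 0 t) (hX' : IntervalIntegrable X' volume 0 t)
    (hδ : ∀ s ∈ Icc 0 T, |X s - X' s| ≤ δ) :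
    |regulator y₀ b σ B X t - regulator y₀ b σ B X' t| ≤ (1 + |b| * T / 2) * δ := by
  have hδ0 : 0 ≤ δ := (abs_nonneg _).trans (hδ t ht)
  have hint : |∫ s in (0:ℝ)..t, (X s - X' s)| ≤ δ * T := by
    have := norm_integral_le_of_norm_le_const (a := 0) (b := t) (C := δ)
      (f := fun s => X s - X' s) fun s hs => by
      rw [uIoc_of_le ht.1] at hs
      exact hδ s ⟨hs.1.le, hs.2.trans ht.2⟩
    rw [Real.norm_eq_abs, sub_zero, abs_of_nonneg ht.1] at this
    exact this.trans (by gcongr; exact ht.2)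
  rw [integral_sub hX hX'] at hint
  calc |regulator y₀ b σ B X t - regulator y₀ b σ B X' t|
      = |(X t - X' t) + b / 2 * ((∫ s in (0:ℝ)..t, X s) - ∫ s in (0:ℝ)..t, X' s)| := by
        rw [regulator, regulator]; ring_nf
    _ ≤ |X t - X' t| + |b / 2| * |(∫ s in (0:ℝ)..t, X s) - ∫ s in (0:ℝ)..t, X' s| :=
        (abs_add_le _ _).trans_eq (by rw [abs_mul])
    _ ≤ δ + |b| / 2 * (δ * T) := by
        rw [abs_div, abs_two]
        gcongr
        exact hδ t ht
    _ = (1 + |b| * T / 2) * δ := by ring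

lemma ContinuousOn.regulator (hY : ContinuousOn Y (Ici 0)) (hB : ContinuousOn B (Ici 0)) :
    ContinuousOn (regulator y₀ b σ B Y) (Ici 0) := by
  have hprim : ContinuousOn (fun t => ∫ s in (0:ℝ)..t, Y s) (Ici 0) :=
    continuousOn_Ici_of_forall_Icc fun T hT => by
      simpa [uIcc_of_le hT] using
        continuousOn_primitive_interval' (hY.intervalIntegrable_of_Ici le_rfl hT) left_mem_uIcc
  exact ((hY.sub continuousOn_const).sub (continuousOn_const.mul hB)).add
    (continuousOn_const.mul hprim)

end Regulator

section Reflection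

variable {y₀ b σ : ℝ} {B : ℝ → ℝ} {Yε : ℝ → ℝ → ℝ}

lemma tendstoUniformlyOn_half_integral (hb : 0 ≤ b) (hB0 : B 0 = 0)
    (hYε : ∀ ε, 0 < ε → SolvesE y₀ b σ B ε (Yε ε)) (T : ℝ) :
    TendstoUniformlyOn (fun ε t => 1 / 2 * ∫ s in (0:ℝ)..t, ε / Yε ε s)
      (regulator y₀ b σ B (lowerEnvelope Yε)) (𝓝[>] (0:ℝ)) (Icc 0 T) := by
  have hu := (tendsto_sqrt_mul_nhdsGT_zero (2 * T)).const_mul (1 + |b| * T / 2)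
  rw [mul_zero] at hu
  refine tendstoUniformlyOn_of_abs_sub_le hu (eventually_mem_nhdsWithin.mono fun ε hε t ht => ?_)
  rw [← (hYε ε hε).regulator_eq ht.1]
  exact abs_regulator_sub_le ht ((hYε ε hε).1.intervalIntegrable_of_Ici le_rfl ht.1)
    ((continuousOn_lowerEnvelope hb hB0 hYε).intervalIntegrable_of_Ici le_rfl ht.1)
    fun s hs => abs_sub_lowerEnvelope_le hb hB0 hYε hs hε

lemma tendsto_half_integral (hb : 0 ≤ b) (hB0 : B 0 = 0)
    (hYε : ∀ ε, 0 < ε → SolvesE y₀ b σ B ε (Yε ε)) {t : ℝ} (ht : 0 ≤ t) :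
    Tendsto (fun ε => 1 / 2 * ∫ s in (0:ℝ)..t, ε / Yε ε s) (𝓝[>] (0:ℝ))
      (𝓝 (regulator y₀ b σ B (lowerEnvelope Yε) t)) :=
  (tendstoUniformlyOn_half_integral hb hB0 hYε t).tendsto_at ⟨ht, le_rfl⟩

lemma monotoneOn_regulator_lowerEnvelope (hb : 0 ≤ b) (hB0 : B 0 = 0)
    (hYε : ∀ ε, 0 < ε → SolvesE y₀ b σ B ε (Yε ε)) :
    MonotoneOn (regulator y₀ b σ B (lowerEnvelope Yε)) (Ici 0) := by
  intro s hs t ht hst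
  refine le_of_tendsto_of_tendsto (tendsto_half_integral hb hB0 hYε hs)
    (tendsto_half_integral hb hB0 hYε ht)
    (eventually_mem_nhdsWithin.mono fun ε hε => ?_)
  rw [← sub_nonneg, (hYε ε hε).half_integral_div_sub hs ht]
  exact mul_nonneg (by norm_num) <| integral_nonneg hst fun u hu =>
    (div_pos hε ((hYε ε hε).2.1 u (hs.out.trans hu.1))).le

lemma regulator_lowerEnvelope_eq_of_pos (hb : 0 ≤ b) (hB0 : B 0 = 0)
    (hYε : ∀ ε, 0 < ε → SolvesE y₀ b σ B ε (Yε ε)) {s t : ℝ} (hs : 0 ≤ s) (hst : s ≤ t)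
    (hpos : ∀ u ∈ Icc s t, 0 < lowerEnvelope Yε u) :
    regulator y₀ b σ B (lowerEnvelope Yε) t = regulator y₀ b σ B (lowerEnvelope Yε) s := by
  obtain ⟨u₀, hu₀, hmin⟩ := isCompact_Icc.exists_isMinOn (nonempty_Icc.2 hst)
    ((continuousOn_lowerEnvelope hb hB0 hYε).mono fun u hu => hs.trans hu.1)
  set δ := lowerEnvelope Yε u₀
  have hδ : 0 < δ := hpos u₀ hu₀
  have hbound : Tendsto (fun ε : ℝ => 1 / 2 * ((t - s) * (ε / δ))) (𝓝[>] 0) (𝓝 0) :=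
    tendsto_nhdsWithin_of_tendsto_nhds (Continuous.tendsto' (by fun_prop) 0 0 (by simp))
  refine le_antisymm ?_ (monotoneOn_regulator_lowerEnvelope hb hB0 hYε hs (hs.trans hst) hst)
  rw [← sub_nonpos]
  refine le_of_tendsto_of_tendsto ((tendsto_half_integral hb hB0 hYε (hs.trans hst)).sub
    (tendsto_half_integral hb hB0 hYε hs)) hbound
    (eventually_mem_nhdsWithin.mono fun ε (hε : 0 < ε) => ?_)
  dsimp only
  rw [(hYε ε hε).half_integral_div_sub hs (hs.trans hst)]
  refine mul_le_mul_of_nonneg_left (intervalIntegral_le_mul_of_le hst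
    ((hYε ε hε).continuousOn_div.intervalIntegrable_of_Ici hs (hs.trans hst)) fun u hu => ?_)
    (by norm_num)
  have hu0 := hs.trans hu.1
  gcongr
  exact (hmin hu).trans (lowerEnvelope_le hYε hu0 hε)

lemma isReflectionFn_regulator_lowerEnvelope (hb : 0 ≤ b) (hBc : ContinuousOn B (Ici 0))
    (hB0 : B 0 = 0) (hYε : ∀ ε, 0 < ε → SolvesE y₀ b σ B ε (Yε ε)) :
    IsReflectionFn (regulator y₀ b σ B (lowerEnvelope Yε)) (lowerEnvelope Yε) :=
  ⟨(continuousOn_lowerEnvelope hb hB0 hYε).regulator hBc,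
    monotoneOn_regulator_lowerEnvelope hb hB0 hYε,
    by simp [regulator, lowerEnvelope_zero hB0 hYε, hB0],
    fun _ _ hs hst hpos => regulator_lowerEnvelope_eq_of_pos hb hB0 hYε hs hst hpos⟩

end Reflection

theorem stmt_12_general (y₀ b σ : ℝ) (hb : 0 < b)
    (B : ℝ → ℝ) (hBc : ContinuousOn B (Set.Ici 0)) (hB0 : B 0 = 0)
    (Yε : ℝ → ℝ → ℝ) (hYε : ∀ ε, 0 < ε → SolvesE y₀ b σ B ε (Yε ε)) :
    ∃ Y L : ℝ → ℝ,
      (∀ t, 0 ≤ t →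
        (0 ≤ Y t ∧ Filter.Tendsto (fun ε => Yε ε t)
          (nhdsWithin 0 (Set.Ioi 0)) (nhds (Y t))) ∧
        Filter.Tendsto (fun ε => (1 / 2) * ∫ s in (0:ℝ)..t, ε / Yε ε s)
          (nhdsWithin 0 (Set.Ioi 0)) (nhds (L t))) ∧
      IsReflectionFn L Y ∧
      (∀ t, 0 ≤ t →
        Y t = y₀ - (b / 2) * (∫ s in (0:ℝ)..t, Y s) + (σ / 2) * B t + L t) ∧
      (∀ T, 0 < T →
        TendstoUniformlyOn (fun ε => Yε ε) Y (nhdsWithin 0 (Set.Ioi 0)) (Set.Icc 0 T) ∧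
        TendstoUniformlyOn (fun ε t => (1 / 2) * ∫ s in (0:ℝ)..t, ε / Yε ε s) L
          (nhdsWithin 0 (Set.Ioi 0)) (Set.Icc 0 T)) := by
  have hY := tendstoUniformlyOn_lowerEnvelope hb.le hB0 hYε
  refine ⟨lowerEnvelope Yε, regulator y₀ b σ B (lowerEnvelope Yε), fun t ht =>
    ⟨⟨lowerEnvelope_nonneg hYε ht, (hY t).tendsto_at ⟨ht, le_rfl⟩⟩,
      tendsto_half_integral hb.le hB0 hYε ht⟩,
    isReflectionFn_regulator_lowerEnvelope hb.le hBc hB0 hYε, fun t _ => ?_,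
    fun T _ => ⟨hY T, tendstoUniformlyOn_half_integral hb.le hB0 hYε T⟩⟩
  rw [regulator]
  ring

/-- Pathwise convergence of square roots of fractional CIR paths to a reflected
fractional OU path (deterministic form of the paper's Theorem 3, continuum version). -/
theorem stmt_12 (y₀ b σ : ℝ) (hy₀ : 0 < y₀) (hb : 0 < b) (hσ : 0 < σ)
    (B : ℝ → ℝ) (hBc : ContinuousOn B (Set.Ici 0)) (hB0 : B 0 = 0)
    (hHol : ∃ lam : ℝ, 0 < lam ∧ lam < 1 ∧ ∀ T, 0 < T → ∃ Λ, 0 ≤ Λ ∧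
      ∀ s ∈ Set.Icc (0:ℝ) T, ∀ t ∈ Set.Icc (0:ℝ) T, |B t - B s| ≤ Λ * |t - s| ^ lam)
    (Yε : ℝ → ℝ → ℝ) (hYε : ∀ ε, 0 < ε → SolvesE y₀ b σ B ε (Yε ε)) :
    ∃ Y L : ℝ → ℝ,
      (∀ t, 0 ≤ t →
        (0 ≤ Y t ∧ Filter.Tendsto (fun ε => Yε ε t)
          (nhdsWithin 0 (Set.Ioi 0)) (nhds (Y t))) ∧
        Filter.Tendsto (fun ε => (1 / 2) * ∫ s in (0:ℝ)..t, ε / Yε ε s)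
          (nhdsWithin 0 (Set.Ioi 0)) (nhds (L t))) ∧
      IsReflectionFn L Y ∧
      (∀ t, 0 ≤ t →
        Y t = y₀ - (b / 2) * (∫ s in (0:ℝ)..t, Y s) + (σ / 2) * B t + L t) ∧
      (∀ T, 0 < T →
        TendstoUniformlyOn (fun ε => Yε ε) Y (nhdsWithin 0 (Set.Ioi 0)) (Set.Icc 0 T) ∧
        TendstoUniformlyOn (fun ε t => (1 / 2) * ∫ s in (0:ℝ)..t, ε / Yε ε s) L
          (nhdsWithin 0 (Set.Ioi 0)) (Set.Icc 0 T)) :=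
  stmt_12_general y₀ b σ hb B hBc hB0 Yε hYε
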